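/- Let x ≥ 0 and let n ≥ 1 be an integer. If j ≥ 2, then the first and second central moments of S_{n,j} satisfy (1-j)/n ≤ (S_{n,j}ψ_x^1)(x) ≤ 0 and 0 ≤ (S_{n,j}ψ_x^2)(x) ≤ 2x/n + (j-1)(j-2)/n². If j ≤ 1, then (S_{n,j}ψ_x^1)(x) = (1-j)/n ≥ 0 and (S_{n,j}ψ_x^2)(x) = 2x/n + (j-1)(j-2)/n² ≥ 0. -/

import Mathlib

open MeasureTheory Real Filter

/-- Szász basis function `s_{n,k}(x)` for natural index `k`. -/
noncomputable def szasz (n k : ℕ) (x : ℝ) : ℝ :=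
  Real.exp (-(n : ℝ) * x) * ((n : ℝ) * x) ^ k / (Nat.factorial k)

/-- Szász basis function for integer index, vanishing for negative index. -/
noncomputable def szaszZ (n : ℕ) (k : ℤ) (x : ℝ) : ℝ :=
  if 0 ≤ k then szasz n k.toNat x else 0

/-- The generalized Szász–Mirakjan–Durrmeyer operator `S_{n,j}`. -/
noncomputable def Sop (n : ℕ) (j : ℤ) (f : ℝ → ℝ) (x : ℝ) : ℝ :=
  f 0 * ∑ k ∈ Finset.range j.toNat, szasz n k x
    + ∑' (k : ℕ), szasz n k x *
        ((n : ℝ) * ∫ t in Set.Ioi (0 : ℝ), szaszZ n ((k : ℤ) - j) t * f t)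

/-- Membership in the class `E_A`: locally integrable on `[0,∞)` with exponential growth. -/
def MemE (A : ℝ) (f : ℝ → ℝ) : Prop :=
  MeasureTheory.LocallyIntegrableOn f (Set.Ici 0) ∧
    ∃ K > 0, ∀ t ≥ (0 : ℝ), |f t| ≤ K * Real.exp (A * t)

/-- Falling factorial `a↓r = a(a-1)⋯(a-r+1)` for integer `a`. -/
def ffall (a : ℤ) (r : ℕ) : ℤ := ∏ i ∈ Finset.range r, (a - i)

open Set
open scoped Nat


-- exponential series lemmas
lemma sumE (y : ℝ) : Summable (fun k : ℕ => y ^ k / k !) :=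
  Real.summable_pow_div_factorial y

lemma tsumE (y : ℝ) : ∑' k : ℕ, y ^ k / k ! = Real.exp y := by
  rw [Real.exp_eq_exp_ℝ, NormedSpace.exp_eq_tsum_div]

lemma shift1 (y : ℝ) (k : ℕ) :
    ((k + 1 : ℕ) : ℝ) * (y ^ (k + 1) / (k + 1)!) = y * (y ^ k / k !) := by
  have h : ((k ! : ℝ)) ≠ 0 := Nat.cast_ne_zero.mpr k.factorial_ne_zero
  rw [Nat.factorial_succ]
  push_cast
  field_simp
  ring

lemma sumE1 (y : ℝ) : Summable (fun k : ℕ => (k : ℝ) * (y ^ k / k !)) := by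
  rw [← summable_nat_add_iff 1]
  exact ((sumE y).mul_left y).congr fun k => (shift1 y k).symm

lemma tsumE1 (y : ℝ) : ∑' k : ℕ, (k : ℝ) * (y ^ k / k !) = y * Real.exp y := by
  rw [Summable.tsum_eq_zero_add (sumE1 y)]
  simp only [Nat.cast_zero, zero_mul, zero_add]
  rw [← tsumE y, ← tsum_mul_left]
  exact tsum_congr fun k => shift1 y k

lemma shift2 (y : ℝ) (k : ℕ) :
    ((k + 2 : ℕ) : ℝ) * (((k + 2 : ℕ) : ℝ) - 1) * (y ^ (k + 2) / (k + 2)!) =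
      y ^ 2 * (y ^ k / k !) := by
  have h : ((k ! : ℝ)) ≠ 0 := Nat.cast_ne_zero.mpr k.factorial_ne_zero
  show ((k + 2 : ℕ) : ℝ) * (((k + 2 : ℕ) : ℝ) - 1) * (y ^ (k + 2) / (k + 1 + 1)!) = _
  rw [Nat.factorial_succ, Nat.factorial_succ]
  push_cast
  field_simp
  ring

lemma sumE2' (y : ℝ) : Summable (fun k : ℕ => (k : ℝ) * ((k : ℝ) - 1) * (y ^ k / k !)) := by
  rw [← summable_nat_add_iff 2]
  exact ((sumE y).mul_left (y ^ 2)).congr fun k => (shift2 y k).symm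

lemma tsumE2' (y : ℝ) :
    ∑' k : ℕ, (k : ℝ) * ((k : ℝ) - 1) * (y ^ k / k !) = y ^ 2 * Real.exp y := by
  have h := Summable.sum_add_tsum_nat_add (f := fun k : ℕ => (k : ℝ) * ((k : ℝ) - 1) * (y ^ k / k !)) 2
    (sumE2' y)
  rw [← h]
  norm_num [Finset.sum_range_succ]
  rw [← tsumE y, ← tsum_mul_left]
  exact tsum_congr fun k => by rw [← shift2 y k]; push_cast; ring

lemma sumE2 (y : ℝ) : Summable (fun k : ℕ => (k : ℝ) ^ 2 * (y ^ k / k !)) :=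
  ((sumE2' y).add (sumE1 y)).congr fun k => by ring

lemma tsumE2 (y : ℝ) :
    ∑' k : ℕ, (k : ℝ) ^ 2 * (y ^ k / k !) = (y ^ 2 + y) * Real.exp y := by
  have : ∀ k : ℕ, (k : ℝ) ^ 2 * (y ^ k / k !)
      = (k : ℝ) * ((k : ℝ) - 1) * (y ^ k / k !) + (k : ℝ) * (y ^ k / k !) := fun k => by ring
  rw [tsum_congr this, Summable.tsum_add (sumE2' y) (sumE1 y), tsumE2' y, tsumE1 y]
  ring


lemma szasz_eq (n k : ℕ) (x : ℝ) :
    szasz n k x = Real.exp (-((n : ℝ) * x)) * (((n : ℝ) * x) ^ k / k !) := by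
  unfold szasz; rw [neg_mul, mul_div_assoc]

lemma szasz_nonneg (n k : ℕ) {x : ℝ} (hx : 0 ≤ x) : 0 ≤ szasz n k x := by
  rw [szasz_eq]
  have : (0:ℝ) ≤ (n:ℝ) * x := by positivity
  positivity

lemma sumQ (n : ℕ) (x : ℝ) (a b c : ℝ) :
    Summable (fun k : ℕ => szasz n k x * (a * (k:ℝ) ^ 2 + b * (k:ℝ) + c)) := by
  set y := (n : ℝ) * x with hy
  refine (((((sumE2 y).mul_left a).add ((sumE1 y).mul_left b)).add
    ((sumE y).mul_left c)).mul_left (Real.exp (-y))).congr fun k => ?_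
  rw [szasz_eq, ← hy]; ring

lemma tsumQ (n : ℕ) (x : ℝ) (a b c : ℝ) :
    ∑' k : ℕ, szasz n k x * (a * (k:ℝ) ^ 2 + b * (k:ℝ) + c)
      = a * (((n:ℝ) * x) ^ 2 + (n:ℝ) * x) + b * ((n:ℝ) * x) + c := by
  set y := (n : ℝ) * x with hy
  have hpt : ∀ k : ℕ, szasz n k x * (a * (k:ℝ) ^ 2 + b * (k:ℝ) + c)
      = Real.exp (-y) * ((a * ((k:ℝ) ^ 2 * (y ^ k / k !)) + b * ((k:ℝ) * (y ^ k / k !)))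
          + c * (y ^ k / k !)) := fun k => by rw [szasz_eq, ← hy]; ring
  rw [tsum_congr hpt, tsum_mul_left,
    Summable.tsum_add ((((sumE2 y).mul_left a)).add ((sumE1 y).mul_left b)) ((sumE y).mul_left c),
    Summable.tsum_add ((sumE2 y).mul_left a) ((sumE1 y).mul_left b),
    tsum_mul_left, tsum_mul_left, tsum_mul_left, tsumE2, tsumE1, tsumE]
  have hexp : Real.exp (-y) * Real.exp y = 1 := by rw [← Real.exp_add]; simp
  calc Real.exp (-y) * (a * ((y ^ 2 + y) * Real.exp y) + b * (y * Real.exp y) + c * Real.exp y)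
      = (Real.exp (-y) * Real.exp y) * (a * (y ^ 2 + y) + b * y + c) := by ring
    _ = a * (y ^ 2 + y) + b * y + c := by rw [hexp]; ring

lemma intOn_pow_exp {b : ℝ} (hb : 0 < b) (q : ℕ) :
    IntegrableOn (fun t : ℝ => t ^ q * Real.exp (-(b * t))) (Ioi 0) := by
  have hq : (-1:ℝ) < (q:ℝ) := by
    have := Nat.cast_nonneg (α := ℝ) q; linarith
  have h := integrableOn_rpow_mul_exp_neg_mul_rpow (p := 1) (s := q) hq one_pos hb
  refine h.congr_fun (fun t ht => ?_) measurableSet_Ioi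
  beta_reduce
  rw [Real.rpow_one, Real.rpow_natCast, neg_mul]

lemma integral_pow_exp {b : ℝ} (hb : 0 < b) (q : ℕ) :
    ∫ t in Ioi (0:ℝ), t ^ q * Real.exp (-(b * t)) = q ! / b ^ (q + 1) := by
  have h2 : ∫ t in Ioi (0:ℝ), t ^ q * Real.exp (-(b * t))
      = ∫ t in Ioi (0:ℝ), t ^ (((q:ℝ) + 1) - 1) * Real.exp (-(b * t)) := by
    refine setIntegral_congr_fun measurableSet_Ioi fun t ht => ?_
    rw [show ((q:ℝ) + 1) - 1 = (q:ℝ) by ring, Real.rpow_natCast]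
  rw [h2, Real.integral_rpow_mul_exp_neg_mul_Ioi (by positivity) hb,
    Real.Gamma_nat_eq_factorial,
    show ((q:ℝ) + 1) = ((q + 1 : ℕ) : ℝ) by push_cast; ring,
    Real.rpow_natCast]
  rw [div_pow, one_pow]
  field_simp

lemma szasz_mul_pow (n m p : ℕ) (t : ℝ) :
    szasz n m t * t ^ p = ((n:ℝ) ^ m / m !) * (t ^ (m + p) * Real.exp (-((n:ℝ) * t))) := by
  rw [szasz_eq, mul_pow, pow_add]; ring

lemma intOn_szasz_pow {n : ℕ} (hn : 1 ≤ n) (m p : ℕ) :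
    IntegrableOn (fun t : ℝ => szasz n m t * t ^ p) (Ioi 0) := by
  have hb : (0:ℝ) < n := by exact_mod_cast hn
  refine IntegrableOn.congr_fun ?_ (fun t _ => (szasz_mul_pow n m p t).symm) measurableSet_Ioi
  exact (intOn_pow_exp hb (m + p)).const_mul ((n:ℝ) ^ m / m !)

lemma integral_szasz_pow {n : ℕ} (hn : 1 ≤ n) (m p : ℕ) :
    ∫ t in Ioi (0:ℝ), szasz n m t * t ^ p = ((m + p)! : ℝ) / (m ! * (n:ℝ) ^ (p + 1)) := by
  have hb : (0:ℝ) < n := by exact_mod_cast hn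
  rw [setIntegral_congr_fun measurableSet_Ioi (fun t (_ : t ∈ Ioi 0) => szasz_mul_pow n m p t),
    integral_const_mul, integral_pow_exp hb (m + p)]
  have h1 : ((m !:ℝ)) ≠ 0 := Nat.cast_ne_zero.mpr m.factorial_ne_zero
  have h2 : (n:ℝ) ^ (m + p + 1) ≠ 0 := by positivity
  field_simp
  rw [pow_add]
  ring

lemma inner1 {n : ℕ} (hn : 1 ≤ n) (m : ℕ) (x : ℝ) :
    (n:ℝ) * ∫ t in Ioi (0:ℝ), szasz n m t * (t - x) = ((m:ℝ) + 1) / n - x := by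
  have hb : (0:ℝ) < n := by exact_mod_cast hn
  have h1 := intOn_szasz_pow hn m 1
  have h0 := intOn_szasz_pow hn m 0
  have hpt : ∀ t ∈ Ioi (0:ℝ), szasz n m t * (t - x)
      = szasz n m t * t ^ 1 - szasz n m t * t ^ 0 * x := fun t _ => by ring
  rw [setIntegral_congr_fun measurableSet_Ioi hpt,
    integral_sub h1 (h0.mul_const x), integral_mul_const,
    integral_szasz_pow hn m 1, integral_szasz_pow hn m 0]
  have h1' : ((m !:ℝ)) ≠ 0 := Nat.cast_ne_zero.mpr m.factorial_ne_zero
  rw [show m + 1 = m.succ from rfl, Nat.factorial_succ, show m + 0 = m from rfl]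
  push_cast
  field_simp

lemma inner2 {n : ℕ} (hn : 1 ≤ n) (m : ℕ) (x : ℝ) :
    (n:ℝ) * ∫ t in Ioi (0:ℝ), szasz n m t * (t - x) ^ 2
      = ((m:ℝ) + 2) * ((m:ℝ) + 1) / (n:ℝ) ^ 2 - 2 * x * ((m:ℝ) + 1) / n + x ^ 2 := by
  have hb : (0:ℝ) < n := by exact_mod_cast hn
  have h2 := intOn_szasz_pow hn m 2
  have h1 := intOn_szasz_pow hn m 1
  have h0 := intOn_szasz_pow hn m 0
  have hpt : ∀ t ∈ Ioi (0:ℝ), szasz n m t * (t - x) ^ 2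
      = szasz n m t * t ^ 2 - szasz n m t * t ^ 1 * (2 * x)
         + szasz n m t * t ^ 0 * x ^ 2 := fun t _ => by ring
  have hsub : IntegrableOn
      (fun t : ℝ => szasz n m t * t ^ 2 - szasz n m t * t ^ 1 * (2 * x)) (Ioi 0) :=
    h2.sub (h1.mul_const (2 * x))
  rw [setIntegral_congr_fun measurableSet_Ioi hpt,
    integral_add hsub (h0.mul_const (x ^ 2)),
    integral_sub h2 (h1.mul_const (2 * x)), integral_mul_const, integral_mul_const,
    integral_szasz_pow hn m 2, integral_szasz_pow hn m 1, integral_szasz_pow hn m 0]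
  have h1' : ((m !:ℝ)) ≠ 0 := Nat.cast_ne_zero.mpr m.factorial_ne_zero
  rw [show m + 2 = (m + 1).succ from rfl, Nat.factorial_succ,
    show m + 1 = m.succ from rfl, Nat.factorial_succ, show m + 0 = m from rfl]
  push_cast
  field_simp
  ring



lemma toNat_cast_real {k : ℕ} {j : ℤ} (h : j ≤ (k:ℤ)) :
    ((((k:ℤ) - j).toNat : ℤ) : ℝ) = (k:ℝ) - (j:ℝ) := by
  rw [Int.toNat_of_nonneg (sub_nonneg.2 h)]; push_cast; ring

lemma L1 {n : ℕ} (hn : 1 ≤ n) (j : ℤ) (x : ℝ) :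
    Sop n j (fun t => t - x) x
      = (1 - (j:ℝ)) / n + (1 / n) * ∑ k ∈ Finset.range j.toNat,
          szasz n k x * ((j:ℝ) - 1 - (k:ℝ)) := by
  have hb : (0:ℝ) < n := by exact_mod_cast hn
  set full := fun k : ℕ => szasz n k x * (((k:ℝ) - (j:ℝ) + 1) / n - x) with hfulldef
  set corr := fun k : ℕ => if (k:ℤ) < j then full k else 0 with hcorrdef
  have hterm : ∀ k : ℕ,
      szasz n k x * ((n:ℝ) * ∫ t in Ioi (0:ℝ), szaszZ n ((k:ℤ) - j) t * (t - x))
        = full k - corr k := by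
    intro k
    by_cases h : j ≤ (k:ℤ)
    · have hkj : (0:ℤ) ≤ (k:ℤ) - j := sub_nonneg.2 h
      simp only [szaszZ, if_pos hkj]
      rw [inner1 hn ((k:ℤ) - j).toNat x, hcorrdef]
      simp only [if_neg (not_lt.2 h), sub_zero, hfulldef]
      have hc : ((((k:ℤ) - j).toNat : ℕ) : ℝ) = (k:ℝ) - (j:ℝ) := by
        exact_mod_cast toNat_cast_real h
      rw [hc]
    · push_neg at h
      have hkj : ¬ (0:ℤ) ≤ (k:ℤ) - j := by omega
      simp only [szaszZ, if_neg hkj, zero_mul, integral_zero, mul_zero,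
        hcorrdef, if_pos h, sub_self]
  have hfull : Summable full := by
    refine (sumQ n x 0 (1/n) ((1 - (j:ℝ))/n - x)).congr fun k => ?_
    simp only [hfulldef]; ring
  have hcorr0 : ∀ k ∉ Finset.range j.toNat, corr k = 0 := by
    intro k hk
    have hjk : j ≤ (k:ℤ) := Int.toNat_le.mp (Nat.le_of_not_lt (fun h => hk (Finset.mem_range.2 h)))
    simp only [hcorrdef, if_neg (not_lt.2 hjk)]
  have hcorr : Summable corr := summable_of_ne_finset_zero hcorr0
  have htsumfull : ∑' k, full k = (1 - (j:ℝ)) / n := by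
    have h1 : ∑' k, full k = ∑' k : ℕ, szasz n k x * (0 * (k:ℝ)^2 + (1/n) * (k:ℝ)
        + ((1 - (j:ℝ))/n - x)) := tsum_congr fun k => by simp only [hfulldef]; ring
    rw [h1, tsumQ]
    field_simp
    ring
  have hsumcorr : ∑ k ∈ Finset.range j.toNat, corr k
      = ∑ k ∈ Finset.range j.toNat, full k := by
    refine Finset.sum_congr rfl fun k hk => ?_
    have : (k:ℤ) < j := Int.lt_toNat.mp (Finset.mem_range.mp hk)
    simp only [hcorrdef, if_pos this]
  unfold Sop
  simp only []
  rw [tsum_congr hterm, Summable.tsum_sub hfull hcorr, tsum_eq_sum hcorr0, hsumcorr, htsumfull]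
  have key : (0 - x) * ∑ k ∈ Finset.range j.toNat, szasz n k x
      - ∑ k ∈ Finset.range j.toNat, full k
      = (1/n) * ∑ k ∈ Finset.range j.toNat, szasz n k x * ((j:ℝ) - 1 - (k:ℝ)) := by
    rw [Finset.mul_sum, Finset.mul_sum, ← Finset.sum_sub_distrib]
    refine Finset.sum_congr rfl fun k _ => ?_
    simp only [hfulldef]; ring
  linarith [key]

lemma L2 {n : ℕ} (hn : 1 ≤ n) (j : ℤ) (x : ℝ) :
    Sop n j (fun t => (t - x) ^ 2) x
      = 2 * x / n + ((j:ℝ) - 1) * ((j:ℝ) - 2) / (n:ℝ) ^ 2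
        - ∑ k ∈ Finset.range j.toNat, szasz n k x *
            (((k:ℝ) - (j:ℝ) + 2) * ((k:ℝ) - (j:ℝ) + 1) / (n:ℝ) ^ 2
              + 2 * x * ((j:ℝ) - 1 - (k:ℝ)) / n) := by
  have hb : (0:ℝ) < n := by exact_mod_cast hn
  set full := fun k : ℕ => szasz n k x *
      (((k:ℝ) - (j:ℝ) + 2) * ((k:ℝ) - (j:ℝ) + 1) / (n:ℝ) ^ 2
        - 2 * x * ((k:ℝ) - (j:ℝ) + 1) / n + x ^ 2) with hfulldef
  set corr := fun k : ℕ => if (k:ℤ) < j then full k else 0 with hcorrdef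
  have hterm : ∀ k : ℕ,
      szasz n k x * ((n:ℝ) * ∫ t in Ioi (0:ℝ), szaszZ n ((k:ℤ) - j) t * (t - x) ^ 2)
        = full k - corr k := by
    intro k
    by_cases h : j ≤ (k:ℤ)
    · have hkj : (0:ℤ) ≤ (k:ℤ) - j := sub_nonneg.2 h
      simp only [szaszZ, if_pos hkj]
      rw [inner2 hn ((k:ℤ) - j).toNat x, hcorrdef]
      simp only [if_neg (not_lt.2 h), sub_zero, hfulldef]
      have hc : ((((k:ℤ) - j).toNat : ℕ) : ℝ) = (k:ℝ) - (j:ℝ) := by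
        exact_mod_cast toNat_cast_real h
      rw [hc]
    · push_neg at h
      have hkj : ¬ (0:ℤ) ≤ (k:ℤ) - j := by omega
      simp only [szaszZ, if_neg hkj, zero_mul, integral_zero, mul_zero,
        hcorrdef, if_pos h, sub_self]
  have hfull : Summable full := by
    refine (sumQ n x (1/(n:ℝ)^2) ((3 - 2*(j:ℝ))/(n:ℝ)^2 - 2*x/n)
      (((j:ℝ) - 1)*((j:ℝ) - 2)/(n:ℝ)^2 - 2*x*(1 - (j:ℝ))/n + x^2)).congr fun k => ?_
    simp only [hfulldef]; ring
  have hcorr0 : ∀ k ∉ Finset.range j.toNat, corr k = 0 := by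
    intro k hk
    have hjk : j ≤ (k:ℤ) := Int.toNat_le.mp (Nat.le_of_not_lt (fun h => hk (Finset.mem_range.2 h)))
    simp only [hcorrdef, if_neg (not_lt.2 hjk)]
  have hcorr : Summable corr := summable_of_ne_finset_zero hcorr0
  have htsumfull : ∑' k, full k = 2 * x / n + ((j:ℝ) - 1) * ((j:ℝ) - 2) / (n:ℝ) ^ 2 := by
    have h1 : ∑' k, full k = ∑' k : ℕ, szasz n k x * ((1/(n:ℝ)^2) * (k:ℝ)^2
        + ((3 - 2*(j:ℝ))/(n:ℝ)^2 - 2*x/n) * (k:ℝ)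
        + (((j:ℝ) - 1)*((j:ℝ) - 2)/(n:ℝ)^2 - 2*x*(1 - (j:ℝ))/n + x^2)) :=
      tsum_congr fun k => by simp only [hfulldef]; ring
    rw [h1, tsumQ]
    field_simp
    ring
  have hsumcorr : ∑ k ∈ Finset.range j.toNat, corr k
      = ∑ k ∈ Finset.range j.toNat, full k := by
    refine Finset.sum_congr rfl fun k hk => ?_
    have : (k:ℤ) < j := Int.lt_toNat.mp (Finset.mem_range.mp hk)
    simp only [hcorrdef, if_pos this]
  unfold Sop
  simp only []
  rw [tsum_congr hterm, Summable.tsum_sub hfull hcorr, tsum_eq_sum hcorr0, hsumcorr, htsumfull]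
  have key : (0 - x) ^ 2 * ∑ k ∈ Finset.range j.toNat, szasz n k x
      - ∑ k ∈ Finset.range j.toNat, full k
      = - ∑ k ∈ Finset.range j.toNat, szasz n k x *
            (((k:ℝ) - (j:ℝ) + 2) * ((k:ℝ) - (j:ℝ) + 1) / (n:ℝ) ^ 2
              + 2 * x * ((j:ℝ) - 1 - (k:ℝ)) / n) := by
    rw [Finset.mul_sum, ← Finset.sum_neg_distrib, ← Finset.sum_sub_distrib]
    refine Finset.sum_congr rfl fun k _ => ?_
    simp only [hfulldef]; ring
  linarith [key]

lemma szaszZ_nonneg (n : ℕ) (k : ℤ) {t : ℝ} (ht : 0 ≤ t) : 0 ≤ szaszZ n k t := by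
  unfold szaszZ
  split
  · exact szasz_nonneg n _ ht
  · exact le_refl 0

lemma Sop_sq_nonneg (n : ℕ) (j : ℤ) {x : ℝ} (hx : 0 ≤ x) :
    0 ≤ Sop n j (fun t => (t - x) ^ 2) x := by
  unfold Sop
  apply add_nonneg
  · have h0 : (fun t : ℝ => (t - x) ^ 2) 0 = (0 - x) ^ 2 := rfl
    rw [h0]
    exact mul_nonneg (sq_nonneg _) (Finset.sum_nonneg fun k _ => szasz_nonneg n k hx)
  · refine tsum_nonneg fun k => mul_nonneg (szasz_nonneg n k hx)
      (mul_nonneg (Nat.cast_nonneg n) ?_)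
    refine setIntegral_nonneg measurableSet_Ioi fun t ht => mul_nonneg
      (szaszZ_nonneg n _ (le_of_lt ht)) (sq_nonneg _)


/-- estimates for the first and second central moments of `S_{n,j}`. -/
theorem stmt_9 (j : ℤ) (n : ℕ) (hn : 1 ≤ n) (x : ℝ) (hx : 0 ≤ x) :
    (2 ≤ j →
      ((1 - (j : ℝ)) / n ≤ Sop n j (fun t => t - x) x ∧ Sop n j (fun t => t - x) x ≤ 0) ∧
      (0 ≤ Sop n j (fun t => (t - x) ^ 2) x ∧
        Sop n j (fun t => (t - x) ^ 2) x ≤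
          2 * x / n + ((j : ℝ) - 1) * ((j : ℝ) - 2) / (n : ℝ) ^ 2)) ∧
    (j ≤ 1 →
      (Sop n j (fun t => t - x) x = (1 - (j : ℝ)) / n ∧ 0 ≤ (1 - (j : ℝ)) / n) ∧
      (Sop n j (fun t => (t - x) ^ 2) x =
          2 * x / n + ((j : ℝ) - 1) * ((j : ℝ) - 2) / (n : ℝ) ^ 2 ∧
        0 ≤ 2 * x / n + ((j : ℝ) - 1) * ((j : ℝ) - 2) / (n : ℝ) ^ 2)) := by
  have hb : (0:ℝ) < n := by exact_mod_cast hn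
  have hs : Summable (fun k : ℕ => szasz n k x) :=
    (sumQ n x 0 0 1).congr fun k => by ring
  have hts : ∑' k : ℕ, szasz n k x = 1 := by
    have h := tsumQ n x 0 0 1
    have h2 : ∑' k : ℕ, szasz n k x
        = ∑' k : ℕ, szasz n k x * (0 * (k:ℝ)^2 + 0 * (k:ℝ) + 1) :=
      tsum_congr fun k => by ring
    rw [h2, h]; ring
  have hpart : ∑ k ∈ Finset.range j.toNat, szasz n k x ≤ 1 := by
    rw [← hts]
    exact Summable.sum_le_tsum _ (fun k _ => szasz_nonneg n k hx) hs
  constructor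
  · -- j ≥ 2
    intro hj
    have hjr : (2:ℝ) ≤ (j:ℝ) := by exact_mod_cast hj
    have hkub : ∀ k ∈ Finset.range j.toNat, (k:ℝ) ≤ (j:ℝ) - 1 := by
      intro k hk
      have h1 : (k:ℤ) < j := Int.lt_toNat.mp (Finset.mem_range.mp hk)
      have h2 : ((k:ℤ):ℝ) + 1 ≤ (j:ℝ) := by exact_mod_cast h1
      push_cast at h2
      linarith
    constructor
    · -- first moment
      rw [L1 hn j x]
      have hSnn : 0 ≤ ∑ k ∈ Finset.range j.toNat, szasz n k x * ((j:ℝ) - 1 - (k:ℝ)) :=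
        Finset.sum_nonneg fun k hk =>
          mul_nonneg (szasz_nonneg n k hx) (by linarith [hkub k hk])
      have hSub : ∑ k ∈ Finset.range j.toNat, szasz n k x * ((j:ℝ) - 1 - (k:ℝ))
          ≤ (j:ℝ) - 1 := by
        calc ∑ k ∈ Finset.range j.toNat, szasz n k x * ((j:ℝ) - 1 - (k:ℝ))
            ≤ ∑ k ∈ Finset.range j.toNat, szasz n k x * ((j:ℝ) - 1) :=
              Finset.sum_le_sum fun k hk => mul_le_mul_of_nonneg_left
                (by have := Nat.cast_nonneg (α := ℝ) k; linarith)
                (szasz_nonneg n k hx)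
          _ = (∑ k ∈ Finset.range j.toNat, szasz n k x) * ((j:ℝ) - 1) := by
              rw [Finset.sum_mul]
          _ ≤ 1 * ((j:ℝ) - 1) := mul_le_mul_of_nonneg_right hpart (by linarith)
          _ = (j:ℝ) - 1 := one_mul _
      constructor
      · have : 0 ≤ (1 / (n:ℝ)) *
            ∑ k ∈ Finset.range j.toNat, szasz n k x * ((j:ℝ) - 1 - (k:ℝ)) :=
          mul_nonneg (by positivity) hSnn
        linarith
      · have h1 : (1 / (n:ℝ)) *
            ∑ k ∈ Finset.range j.toNat, szasz n k x * ((j:ℝ) - 1 - (k:ℝ))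
            ≤ (1 / (n:ℝ)) * ((j:ℝ) - 1) :=
          mul_le_mul_of_nonneg_left hSub (by positivity)
        have h2 : (1 - (j:ℝ)) / n + (1 / (n:ℝ)) * ((j:ℝ) - 1) = 0 := by
          field_simp
          ring
        linarith
    · -- second moment
      refine ⟨Sop_sq_nonneg n j hx, ?_⟩
      rw [L2 hn j x]
      have hSnn : 0 ≤ ∑ k ∈ Finset.range j.toNat, szasz n k x *
          (((k:ℝ) - (j:ℝ) + 2) * ((k:ℝ) - (j:ℝ) + 1) / (n:ℝ) ^ 2
            + 2 * x * ((j:ℝ) - 1 - (k:ℝ)) / n) := by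
        refine Finset.sum_nonneg fun k hk => mul_nonneg (szasz_nonneg n k hx) ?_
        have h1 : (k:ℤ) < j := Int.lt_toNat.mp (Finset.mem_range.mp hk)
        have hu : (k:ℤ) - j + 1 ≤ 0 := by omega
        have hprod : (0:ℤ) ≤ ((k:ℤ) - j + 2) * ((k:ℤ) - j + 1) := by
          rcases hu.lt_or_eq with hlt | h0
          · exact mul_nonneg_of_nonpos_of_nonpos (by omega) (by omega)
          · rw [h0, mul_zero]
        have hprodr : (0:ℝ) ≤ ((k:ℝ) - (j:ℝ) + 2) * ((k:ℝ) - (j:ℝ) + 1) := by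
          exact_mod_cast hprod
        refine add_nonneg (div_nonneg hprodr (by positivity)) (div_nonneg ?_ hb.le)
        have := hkub k hk
        nlinarith
      linarith
  · -- j ≤ 1
    intro hj
    have hjr : (j:ℝ) ≤ 1 := by exact_mod_cast hj
    have hS1 : ∑ k ∈ Finset.range j.toNat, szasz n k x * ((j:ℝ) - 1 - (k:ℝ)) = 0 := by
      rcases le_or_gt j 0 with h0 | h1
      · rw [Int.toNat_of_nonpos h0]
        simp
      · have hj1 : j = 1 := by omega
        subst hj1
        simp [Finset.sum_range_one]
    have hS2 : ∑ k ∈ Finset.range j.toNat, szasz n k x *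
        (((k:ℝ) - (j:ℝ) + 2) * ((k:ℝ) - (j:ℝ) + 1) / (n:ℝ) ^ 2
          + 2 * x * ((j:ℝ) - 1 - (k:ℝ)) / n) = 0 := by
      rcases le_or_gt j 0 with h0 | h1
      · rw [Int.toNat_of_nonpos h0]
        simp
      · have hj1 : j = 1 := by omega
        subst hj1
        norm_num [Finset.sum_range_one]
    have hnn2 : 0 ≤ 2 * x / n + ((j : ℝ) - 1) * ((j : ℝ) - 2) / (n : ℝ) ^ 2 :=
      add_nonneg (div_nonneg (by linarith) hb.le)
        (div_nonneg (mul_nonneg_of_nonpos_of_nonpos (by linarith) (by linarith)) (by positivity))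
    refine ⟨⟨?_, div_nonneg (by linarith) hb.le⟩, ⟨?_, hnn2⟩⟩
    · rw [L1 hn j x, hS1, mul_zero, add_zero]
    · rw [L2 hn j x, hS2, sub_zero]
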